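/- arXiv:0912.2885 — 3 statements merged into one kernel-verified Lean document; each statement's English description precedes it below -/
import Mathlib

section
/- Fix y₀ > 0, 0 < x₀ < y₀/2, and c with 1 ≤ c < 2, and set k = c(1 - c/2)·y₀² > 0. Let x(t) = x₀ e^{-Y(t)} / (1 - x₀ ∫₀ᵗ e^{-Y(u)} du) with Y(t) = -εt²/2 + y₀t be the solution of x' = -(y₀ - εt)x + x². Then as ε → 0⁺, x(c·y₀/ε) is bounded above by x₀ e^{-k/ε} / (1 - 2x₀/y₀) (up to a multiplicative constant); in particular x(c·y₀/ε) ≤ 2x₀ for all sufficiently small ε > 0. -/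
/-!
Write `Y(t) = y₀ t - ε t² / 2` and `t_ε = c y₀ / ε`, so that `Y(t_ε) = k / ε`. Since `Y` is concave
with its maximum at `y₀ / ε`, on `[0, t_ε]` it dominates either `y₀ u / 2` (before the maximum) or
its value `k / ε` at the right end point (after it). Hence the integral in the denominator is at most
`2 / y₀ + t_ε e^{-k/ε}`, and `t_ε e^{-k/ε} = c y₀ ε⁻¹ e^{-k/ε} → 0`, so the denominator stays above
half of `1 - 2 x₀ / y₀` while the numerator is `x₀ e^{-k/ε}`.
-/

open Real Filter Topology Set

lemma integral_exp_neg_mul_le_inv {a : ℝ} (ha : 0 < a) (t : ℝ) :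
    ∫ u in (0 : ℝ)..t, exp (-a * u) ≤ a⁻¹ := by
  have hint : ∫ u in (0 : ℝ)..t, exp (-a * u) = (1 - exp (-a * t)) / a := by
    rw [intervalIntegral.integral_comp_mul_left (fun u => exp u) (neg_ne_zero.2 ha.ne'),
      integral_exp]
    simp only [smul_eq_mul, mul_zero, exp_zero]
    field_simp
    ring
  rw [hint, div_le_iff₀ ha, inv_mul_cancel₀ ha.ne']
  linarith [exp_pos (-a * t)]

/-- `Y(t) = ∫₀ᵗ (y₀ - ε s) ds` along the slow variable. -/
noncomputable def riccatiPhase (y₀ ε t : ℝ) : ℝ := -ε * t ^ 2 / 2 + y₀ * t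

lemma riccatiPhase_ge_or_ge {y₀ ε u t : ℝ} (hε : 0 ≤ ε) (hu : 0 ≤ u) (hut : u ≤ t) :
    y₀ / 2 * u ≤ riccatiPhase y₀ ε u ∨ riccatiPhase y₀ ε t ≤ riccatiPhase y₀ ε u := by
  unfold riccatiPhase
  rcases le_or_gt (ε * u) y₀ with h | h
  · left
    nlinarith [mul_nonneg hu (sub_nonneg.2 h)]
  · right
    -- `Y u - Y t = (t - u) (ε (t + u) / 2 - y₀)`, and `ε (t + u) ≥ 2 ε u > 2 y₀`
    nlinarith [mul_nonneg (sub_nonneg.2 hut) (mul_nonneg hε (sub_nonneg.2 hut))]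

lemma exp_neg_riccatiPhase_le {y₀ ε u t : ℝ} (hε : 0 ≤ ε) (hu : 0 ≤ u) (hut : u ≤ t) :
    exp (-riccatiPhase y₀ ε u) ≤ exp (-(y₀ / 2) * u) + exp (-riccatiPhase y₀ ε t) := by
  have h₁ := (exp_pos (-(y₀ / 2) * u)).le
  have h₂ := (exp_pos (-riccatiPhase y₀ ε t)).le
  rcases riccatiPhase_ge_or_ge (y₀ := y₀) hε hu hut with h | h
  · have : exp (-riccatiPhase y₀ ε u) ≤ exp (-(y₀ / 2) * u) := exp_le_exp.2 (by linarith)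
    linarith
  · have : exp (-riccatiPhase y₀ ε u) ≤ exp (-riccatiPhase y₀ ε t) := exp_le_exp.2 (by linarith)
    linarith

lemma integral_exp_neg_riccatiPhase_le {y₀ ε t : ℝ} (hy₀ : 0 < y₀) (hε : 0 ≤ ε) (ht : 0 ≤ t) :
    ∫ u in (0 : ℝ)..t, exp (-riccatiPhase y₀ ε u) ≤ 2 / y₀ + t * exp (-riccatiPhase y₀ ε t) := by
  have hcont : Continuous fun u => exp (-riccatiPhase y₀ ε u) := by
    unfold riccatiPhase; fun_prop
  calc ∫ u in (0 : ℝ)..t, exp (-riccatiPhase y₀ ε u)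
      ≤ ∫ u in (0 : ℝ)..t, (exp (-(y₀ / 2) * u) + exp (-riccatiPhase y₀ ε t)) :=
        intervalIntegral.integral_mono_on ht (hcont.intervalIntegrable _ _)
          (by apply Continuous.intervalIntegrable; fun_prop)
          fun u hu => exp_neg_riccatiPhase_le hε hu.1 hu.2
    _ = (∫ u in (0 : ℝ)..t, exp (-(y₀ / 2) * u)) + t * exp (-riccatiPhase y₀ ε t) := by
        rw [intervalIntegral.integral_add (by apply Continuous.intervalIntegrable; fun_prop)
          intervalIntegrable_const]
        simp
    _ ≤ 2 / y₀ + t * exp (-riccatiPhase y₀ ε t) := by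
        have := integral_exp_neg_mul_le_inv (half_pos hy₀) t
        rw [inv_div] at this
        linarith

lemma riccatiPhase_mul_div (y₀ c : ℝ) {ε : ℝ} (hε : ε ≠ 0) :
    riccatiPhase y₀ ε (c * y₀ / ε) = c * (1 - c / 2) * y₀ ^ 2 / ε := by
  unfold riccatiPhase
  field_simp
  ring

lemma riccati_solution_le {y₀ x₀ ε t : ℝ} (hy₀ : 0 < y₀) (hx₀ : 0 ≤ x₀) (hε : 0 ≤ ε)
    (ht : 0 ≤ t) (hd : 0 < 1 - 2 * x₀ / y₀)
    (hsmall : x₀ * (t * exp (-riccatiPhase y₀ ε t)) ≤ (1 - 2 * x₀ / y₀) / 2) :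
    x₀ * exp (-riccatiPhase y₀ ε t) /
        (1 - x₀ * ∫ u in (0 : ℝ)..t, exp (-riccatiPhase y₀ ε u)) ≤
      2 * (x₀ * exp (-riccatiPhase y₀ ε t) / (1 - 2 * x₀ / y₀)) := by
  have hI := mul_le_mul_of_nonneg_left (integral_exp_neg_riccatiPhase_le hy₀ hε ht) hx₀
  have hden : (1 - 2 * x₀ / y₀) / 2 ≤ 1 - x₀ * ∫ u in (0 : ℝ)..t, exp (-riccatiPhase y₀ ε u) := by
    have hsplit : x₀ * (2 / y₀ + t * exp (-riccatiPhase y₀ ε t)) =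
        2 * x₀ / y₀ + x₀ * (t * exp (-riccatiPhase y₀ ε t)) := by ring
    linarith
  calc _ ≤ x₀ * exp (-riccatiPhase y₀ ε t) / ((1 - 2 * x₀ / y₀) / 2) :=
        div_le_div_of_nonneg_left (by positivity) (by positivity) hden
    _ = _ := by field_simp

lemma tendsto_inv_mul_exp_neg_div_nhdsGT_zero {k : ℝ} (hk : 0 < k) :
    Tendsto (fun ε : ℝ => ε⁻¹ * exp (-k / ε)) (𝓝[>] 0) (𝓝 0) := by
  have h := (tendsto_rpow_mul_exp_neg_mul_atTop_nhds_zero 1 k hk).comp tendsto_inv_nhdsGT_zero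
  refine h.congr fun ε => ?_
  simp [div_eq_mul_inv]

lemma tendsto_exp_neg_div_nhdsGT_zero {k : ℝ} (hk : 0 < k) :
    Tendsto (fun ε : ℝ => exp (-k / ε)) (𝓝[>] 0) (𝓝 0) := by
  have h := tendsto_exp_atBot.comp
    (tendsto_inv_nhdsGT_zero.const_mul_atTop_of_neg (neg_lt_zero.2 hk))
  exact h.congr fun ε => by simp [div_eq_mul_inv]

/-- Delay to the dynamical transcritical bifurcation: for `y₀ > 0`, `0 < x₀ < y₀/2`,
`1 ≤ c < 2` and `k = c(1 - c/2)y₀² > 0`, the solution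
`x_ε(t) = x₀ e^{-Y(t)} / (1 - x₀ ∫₀ᵗ e^{-Y(u)} du)`, `Y(t) = -εt²/2 + y₀ t`, of
`x' = -(y₀ - εt)x + x²` satisfies, as `ε → 0⁺`,
`x_ε(c y₀/ε) ≤ M · x₀ e^{-k/ε}/(1 - 2x₀/y₀)` for some constant `M`; in particular
`x_ε(c y₀/ε) ≤ 2 x₀` for all sufficiently small `ε > 0`. -/
theorem delay_to_transcritical_bifurcation (y₀ x₀ c : ℝ) (hy₀ : 0 < y₀)
    (hx₀ : 0 < x₀) (hx₀' : x₀ < y₀ / 2) (hc1 : 1 ≤ c) (hc2 : c < 2) :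
    let k : ℝ := c * (1 - c / 2) * y₀ ^ 2
    let Y : ℝ → ℝ → ℝ := fun ε t => -ε * t ^ 2 / 2 + y₀ * t
    let x : ℝ → ℝ → ℝ := fun ε t =>
      x₀ * Real.exp (-Y ε t) / (1 - x₀ * ∫ u in (0 : ℝ)..t, Real.exp (-Y ε u))
    0 < k ∧
    ∃ M > 0, ∃ ε₀ > 0, ∀ ε : ℝ, 0 < ε → ε < ε₀ →
      x ε (c * y₀ / ε) ≤ M * (x₀ * Real.exp (-k / ε) / (1 - 2 * x₀ / y₀)) ∧
      x ε (c * y₀ / ε) ≤ 2 * x₀ := by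
  intro k Y x
  have hk : 0 < k := mul_pos (mul_pos (by linarith) (by linarith)) (pow_pos hy₀ 2)
  set d := 1 - 2 * x₀ / y₀
  have hd : 0 < d := by rw [sub_pos, div_lt_one hy₀]; linarith
  have hsmall : ∀ᶠ ε in 𝓝[>] 0,
      x₀ * (c * y₀) * (ε⁻¹ * exp (-k / ε)) < d / 2 ∧ exp (-k / ε) < d := by
    have h := (tendsto_inv_mul_exp_neg_div_nhdsGT_zero hk).const_mul (x₀ * (c * y₀))
    rw [mul_zero] at h
    exact (h.eventually (gt_mem_nhds (half_pos hd))).and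
      ((tendsto_exp_neg_div_nhdsGT_zero hk).eventually (gt_mem_nhds hd))
  obtain ⟨ε₀, hε₀, hε₀small⟩ := (nhdsGT_basis 0).eventually_iff.mp hsmall
  refine ⟨hk, 2, two_pos, ε₀, hε₀, fun ε hε hεε₀ => ?_⟩
  obtain ⟨hprod, hexp⟩ := hε₀small ⟨hε, hεε₀⟩
  have hbound : x ε (c * y₀ / ε) ≤ 2 * (x₀ * exp (-k / ε) / d) := by
    have hY : -riccatiPhase y₀ ε (c * y₀ / ε) = -k / ε := by
      rw [riccatiPhase_mul_div y₀ c hε.ne', neg_div]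
    calc x ε (c * y₀ / ε) ≤ 2 * (x₀ * exp (-riccatiPhase y₀ ε (c * y₀ / ε)) / d) :=
          riccati_solution_le hy₀ hx₀.le hε.le (by positivity) hd <| by
            rw [hY]
            linarith [show x₀ * (c * y₀ / ε * exp (-k / ε)) =
              x₀ * (c * y₀) * (ε⁻¹ * exp (-k / ε)) by ring]
      _ = 2 * (x₀ * exp (-k / ε) / d) := by rw [hY]
  refine ⟨hbound, hbound.trans ?_⟩
  rw [mul_div_assoc, mul_le_mul_iff_of_pos_left two_pos]
  exact mul_le_of_le_one_right hx₀.le ((div_le_one hd).2 hexp.le)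
end

section
/- Let b > 1, ε > 0, δ > 0, η > 0, C > 0, k > 0, and X₀ = C·e^{-k/ε}. The transition time T solving X(T) = η for the explicit solution X(t) = X₀ exp[2(b-1)t + (2δ/ε)(e^{-εt} - 1)] satisfies the equation 2(b-1)T + (2δ/ε)e^{-εT} = k/ε + ln(η/C) + 2δ/ε, and this equation has the closed-form solution T = (1/ε)·W(-(δ/(b-1))·exp(-(ε ln(η/C) + k + 2δ)/(2(b-1)))) + (1/(2(b-1)))·(ln(η/C) + (k + 2δ)/ε), where W is the Lambert W function (a branch of the inverse of w ↦ w·eʷ). -/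
/-! The level-crossing condition `X(t) = η` is, after taking logarithms, the equation
`α t + β e^{-εt} = γ`. The substitution `t = w/ε + γ/α` turns it into
`w eʷ = -(βε/α) e^{-εγ/α}`, which is exactly the defining identity of `w = W(z)`. -/

open Real

theorem mul_exp_eq_iff_eq_log_div {C η x : ℝ} (hC : 0 < C) (hη : 0 < η) :
    C * exp x = η ↔ x = log (η / C) := by
  rw [← exp_eq_exp (x := x), exp_log (div_pos hη hC), eq_div_iff hC.ne', mul_comm]

theorem lambert_solves_linear_add_exp {α β γ ε w : ℝ} (hα : α ≠ 0) (hε : ε ≠ 0)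
    (hw : w * exp w = -(β * ε / α) * exp (-(ε * γ / α))) :
    α * (w / ε + γ / α) + β * exp (-ε * (w / ε + γ / α)) = γ := by
  have hexp : exp (-ε * (w / ε + γ / α)) = exp (-w) * exp (-(ε * γ / α)) := by
    rw [← exp_add]; congr 1; field_simp; ring
  have hβ : β * exp (-(ε * γ / α)) = -(α / ε) * (w * exp w) := by
    rw [hw]; field_simp
  have hβexp : β * exp (-ε * (w / ε + γ / α)) = -(α / ε) * w := by
    rw [hexp, mul_left_comm, hβ, exp_neg]; field_simp
  rw [hβexp]; field_simp; ring

theorem transition_time_lambert_general (b ε δ η C k : ℝ) (hb : 1 < b) (hε : 0 < ε)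
    (hη : 0 < η) (hC : 0 < C) (W : ℝ → ℝ)
    (hW : W (-(δ / (b - 1)) *
            Real.exp (-(ε * Real.log (η / C) + k + 2 * δ) / (2 * (b - 1)))) *
          Real.exp (W (-(δ / (b - 1)) *
            Real.exp (-(ε * Real.log (η / C) + k + 2 * δ) / (2 * (b - 1))))) =
          -(δ / (b - 1)) *
            Real.exp (-(ε * Real.log (η / C) + k + 2 * δ) / (2 * (b - 1)))) :
    let X₀ : ℝ := C * Real.exp (-k / ε)
    let X : ℝ → ℝ := fun t =>
      X₀ * Real.exp (2 * (b - 1) * t + (2 * δ / ε) * (Real.exp (-ε * t) - 1))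
    let T : ℝ := (1 / ε) * W (-(δ / (b - 1)) *
        Real.exp (-(ε * Real.log (η / C) + k + 2 * δ) / (2 * (b - 1)))) +
      (1 / (2 * (b - 1))) * (Real.log (η / C) + (k + 2 * δ) / ε)
    (∀ t : ℝ, X t = η ↔
      2 * (b - 1) * t + (2 * δ / ε) * Real.exp (-ε * t) =
        k / ε + Real.log (η / C) + 2 * δ / ε) ∧
    2 * (b - 1) * T + (2 * δ / ε) * Real.exp (-ε * T) =
      k / ε + Real.log (η / C) + 2 * δ / ε := by
  intro X₀ X T
  have hα : 2 * (b - 1) ≠ 0 := by linarith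
  set γ := k / ε + log (η / C) + 2 * δ / ε
  set w := W (-(δ / (b - 1)) * exp (-(ε * log (η / C) + k + 2 * δ) / (2 * (b - 1))))
  refine ⟨fun t => ?_, ?_⟩
  · rw [show X t = C * exp (-k / ε + (2 * (b - 1) * t + 2 * δ / ε * (exp (-ε * t) - 1)))
      by simp only [X, X₀, exp_add, mul_assoc], mul_exp_eq_iff_eq_log_div hC hη]
    constructor <;> intro h <;> linear_combination h
  · have hz : -(δ / (b - 1)) * exp (-(ε * log (η / C) + k + 2 * δ) / (2 * (b - 1))) =
        -(2 * δ / ε * ε / (2 * (b - 1))) * exp (-(ε * γ / (2 * (b - 1)))) := by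
      congr 2
      · field_simp
      · simp only [γ]; field_simp; ring
    have hT : T = w / ε + γ / (2 * (b - 1)) := by
      simp only [T, w, γ]; field_simp; ring
    rw [hT]
    exact lambert_solves_linear_add_exp hα hε.ne' (hz ▸ hW)

/-- Transition time near the saddle: with `X₀ = C e^{-k/ε}` and
`X(t) = X₀ exp[2(b-1)t + (2δ/ε)(e^{-εt} - 1)]`, the time `T` at which `X(T) = η`
is characterized by `2(b-1)T + (2δ/ε)e^{-εT} = k/ε + ln(η/C) + 2δ/ε`, and this
equation is solved in closed form by the Lambert function `W` (a branch of the
inverse of `w ↦ w eʷ`). -/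
theorem transition_time_lambert (b ε δ η C k : ℝ) (hb : 1 < b) (hε : 0 < ε)
    (hδ : 0 < δ) (hη : 0 < η) (hC : 0 < C) (hk : 0 < k) (W : ℝ → ℝ)
    (hW : W (-(δ / (b - 1)) *
            Real.exp (-(ε * Real.log (η / C) + k + 2 * δ) / (2 * (b - 1)))) *
          Real.exp (W (-(δ / (b - 1)) *
            Real.exp (-(ε * Real.log (η / C) + k + 2 * δ) / (2 * (b - 1))))) =
          -(δ / (b - 1)) *
            Real.exp (-(ε * Real.log (η / C) + k + 2 * δ) / (2 * (b - 1)))) :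
    let X₀ : ℝ := C * Real.exp (-k / ε)
    let X : ℝ → ℝ := fun t =>
      X₀ * Real.exp (2 * (b - 1) * t + (2 * δ / ε) * (Real.exp (-ε * t) - 1))
    let T : ℝ := (1 / ε) * W (-(δ / (b - 1)) *
        Real.exp (-(ε * Real.log (η / C) + k + 2 * δ) / (2 * (b - 1)))) +
      (1 / (2 * (b - 1))) * (Real.log (η / C) + (k + 2 * δ) / ε)
    (∀ t : ℝ, X t = η ↔
      2 * (b - 1) * t + (2 * δ / ε) * Real.exp (-ε * t) =
        k / ε + Real.log (η / C) + 2 * δ / ε) ∧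
    2 * (b - 1) * T + (2 * δ / ε) * Real.exp (-ε * T) =
      k / ε + Real.log (η / C) + 2 * δ / ε :=
  transition_time_lambert_general b ε δ η C k hb hε hη hC W hW
end

section
/- With the explicit solution Y(t) = δe^{-εt} and the transition time T given by the Lambert-function formula, the exit value Y_out = Y(T) satisfies, as ε → 0⁺, Y_out = δ·exp[-W(-(δ/(b-1))·e^{-(2δ+k)/(2(b-1))}) - (2δ+k)/(2(b-1))] + O(ε). In particular, the exit value has a strictly positive limit independent of ε. -/
open Real Set Filter Topology Asymptotics

/-! Solving `W(z) e^{W(z)} = z` for `e^{-W(z)}` turns the exit value into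
`Y_out(ε) = -(b - 1) W(z(ε))`, where `z(ε)` is the argument of `W` in `T(ε)`; the entry data
`η` and `X₀ = C e^{-k/ε}` enter `z(ε)` only through `ε log (η / C)`, which vanishes at `ε = 0`.
Because `k > 0`, `z(0) > -(δ/(b-1)) e^{-δ/(b-1)} ≥ -e⁻¹` lies strictly inside the domain of the
principal branch, where `W` is Lipschitz; as `z` is smooth, `Y_out(ε) = -(b - 1) W(z(0)) + O(ε)`. -/

/-- The branch point `W = -1` is only reached at `z = -e⁻¹`, so by the intermediate value theorem
the continuous branch through `W 0 = 0` stays above `-1` on `(-e⁻¹, 0]`. -/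
lemma neg_one_lt_lambert {W : ℝ → ℝ} {z : ℝ} (hWcont : Continuous W) (hW0 : W 0 = 0)
    (hWinv : ∀ z ∈ Icc (-exp (-1)) 0, W z * exp (W z) = z)
    (hz : -exp (-1) < z) (hz0 : z ≤ 0) : -1 < W z := by
  by_contra! h
  obtain ⟨z', hz', hWz'⟩ := intermediate_value_Icc hz0 hWcont.continuousOn
    (show (-1 : ℝ) ∈ Icc (W z) (W 0) from ⟨h, by rw [hW0]; norm_num⟩)
  have := hWinv z' ⟨hz.le.trans hz'.1, hz'.2⟩
  rw [hWz'] at this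
  linarith [hz'.1]

lemma mul_sub_le_mul_exp_sub_mul_exp {m x y : ℝ} (hm : -1 ≤ m) (hmx : m ≤ x) (hxy : x ≤ y) :
    (1 + m) * exp m * (y - x) ≤ y * exp y - x * exp x := by
  have hderiv : ∀ w, HasDerivAt (fun w => w * exp w) ((1 + w) * exp w) w := fun w =>
    ((hasDerivAt_id' w).mul (hasDerivAt_exp w)).congr_deriv (by ring)
  refine (convex_Ici m).mul_sub_le_image_sub_of_le_deriv
    (fun w _ => (hderiv w).continuousAt.continuousWithinAt)
    (fun w _ => (hderiv w).differentiableAt.differentiableWithinAt) (fun w hw => ?_)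
    x hmx y (hmx.trans hxy) hxy
  rw [interior_Ici, mem_Ioi] at hw
  rw [(hderiv w).deriv]
  gcongr
  linarith

/-- On `[a, 0]` with `a > -e⁻¹` the branch `W` takes values in some `[m, 0]` with `m > -1`,
where the derivative `(1 + w) eʷ` of its inverse `w eʷ` is bounded below by `(1 + m) eᵐ > 0`. -/
lemma lambert_lipschitzOnWith {W : ℝ → ℝ} (hWcont : Continuous W) (hW0 : W 0 = 0)
    (hWinv : ∀ z ∈ Icc (-exp (-1)) 0, W z * exp (W z) = z)
    {a : ℝ} (ha : -exp (-1) < a) (ha0 : a ≤ 0) : ∃ K, LipschitzOnWith K W (Icc a 0) := by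
  have hdom : Icc a 0 ⊆ Icc (-exp (-1)) 0 := Icc_subset_Icc_left ha.le
  obtain ⟨zm, hzm, hmin⟩ := isCompact_Icc.exists_isMinOn (nonempty_Icc.2 ha0) hWcont.continuousOn
  have hm : -1 < W zm := neg_one_lt_lambert hWcont hW0 hWinv (ha.trans_le hzm.1) hzm.2
  have hc : 0 < (1 + W zm) * exp (W zm) := mul_pos (by linarith) (exp_pos _)
  refine ⟨_, LipschitzOnWith.of_le_add_mul' ((1 + W zm) * exp (W zm))⁻¹ fun z₁ hz₁ z₂ hz₂ => ?_⟩
  rcases le_or_gt (W z₁) (W z₂) with hle | hlt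
  · exact le_add_of_le_of_nonneg hle (mul_nonneg (inv_pos.2 hc).le dist_nonneg)
  · have key := mul_sub_le_mul_exp_sub_mul_exp hm.le (hmin hz₂) hlt.le
    rw [hWinv z₁ (hdom hz₁), hWinv z₂ (hdom hz₂)] at key
    rw [← sub_le_iff_le_add', inv_mul_eq_div, le_div_iff₀ hc, Real.dist_eq]
    linarith [le_abs_self (z₁ - z₂)]

lemma LipschitzOnWith.isBigO_sub {E F : Type*} [SeminormedAddCommGroup E]
    [SeminormedAddCommGroup F] {f : E → F} {K : NNReal} {s : Set E} {x : E}
    (hf : LipschitzOnWith K f s) (hs : s ∈ 𝓝 x) :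
    (fun y => f y - f x) =O[𝓝 x] (fun y => y - x) :=
  isBigO_iff.2 ⟨K, eventually_of_mem hs fun y hy => by
    simpa only [← dist_eq_norm] using hf.dist_le_mul y hy x (mem_of_mem_nhds hs)⟩

lemma isBigO_lambert_comp_sub {W : ℝ → ℝ} (hWcont : Continuous W) (hW0 : W 0 = 0)
    (hWinv : ∀ z ∈ Icc (-exp (-1)) 0, W z * exp (W z) = z)
    {g : ℝ → ℝ} {x : ℝ} (hg : ContDiffAt ℝ 1 g x) (hgx : g x ∈ Ioo (-exp (-1)) 0) :
    (fun y => W (g y) - W (g x)) =O[𝓝 x] (fun y => y - x) := by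
  obtain ⟨a, ha, hax⟩ := exists_between hgx.1
  obtain ⟨KW, hW⟩ := lambert_lipschitzOnWith hWcont hW0 hWinv ha (hax.trans hgx.2).le
  obtain ⟨Kg, t, ht, hgt⟩ := hg.exists_lipschitzOnWith
  have hpre : g ⁻¹' Ioo a 0 ∈ 𝓝 x := hg.continuousAt.preimage_mem_nhds (Ioo_mem_nhds hax hgx.2)
  exact (hW.comp (hgt.mono inter_subset_left) fun y hy => Ioo_subset_Icc_self hy.2).isBigO_sub
    (inter_mem ht hpre)

lemma neg_exp_neg_one_lt_neg_mul_exp_neg {x y : ℝ} (hxy : x < y) : -exp (-1) < -x * exp (-y) := by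
  rcases le_or_gt x 0 with hx | hx
  · nlinarith [exp_pos (-1), exp_pos (-y)]
  · calc -exp (-1) ≤ -(x * exp (-x)) := neg_le_neg (mul_exp_neg_le_exp_neg_one x)
      _ < -x * exp (-y) := by
        rw [neg_mul, neg_lt_neg_iff]
        exact mul_lt_mul_of_pos_left (exp_lt_exp.2 (neg_lt_neg hxy)) hx

lemma mul_exp_sub_eq_of_mul_exp_eq {B δ θ w : ℝ} (hB : B ≠ 0)
    (h : w * exp w = -(δ / B) * exp θ) : δ * exp (θ - w) = -B * w := by
  rw [exp_sub, ← mul_div_assoc, div_eq_iff (exp_pos w).ne', mul_assoc, h]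
  field_simp

lemma exists_abs_le_mul_of_isBigO {f : ℝ → ℝ} (h : f =O[𝓝[>] 0] id) :
    ∃ M > 0, ∃ ε₀ > 0, ∀ ε : ℝ, 0 < ε → ε < ε₀ → |f ε| ≤ M * ε := by
  obtain ⟨M, hM, hf⟩ := isBigO_iff'.1 h
  obtain ⟨ε₀, hε₀, hball⟩ := (nhdsGT_basis (0 : ℝ)).eventually_iff.1 hf
  refine ⟨M, hM, ε₀, hε₀, fun ε hε hεε₀ => ?_⟩
  simpa [abs_of_pos hε] using hball ⟨hε, hεε₀⟩

/-- The argument of `W` in the transition time `T(ε)`, with `L = log (η / C)`. -/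
noncomputable def lambertArg (b δ k L ε : ℝ) : ℝ :=
  -(δ / (b - 1)) * exp (-(ε * L + k + 2 * δ) / (2 * (b - 1)))

section lambertArg

variable {b δ k L : ℝ}

lemma contDiff_lambertArg {n : WithTop ℕ∞} : ContDiff ℝ n (lambertArg b δ k L) := by
  unfold lambertArg; fun_prop

lemma lambertArg_neg (hb : 1 < b) (hδ : 0 < δ) (ε : ℝ) : lambertArg b δ k L ε < 0 :=
  mul_neg_of_neg_of_pos (neg_neg_of_pos (div_pos hδ (sub_pos.2 hb))) (exp_pos _)

lemma lambertArg_zero :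
    lambertArg b δ k L 0 = -(δ / (b - 1)) * exp (-(2 * δ + k) / (2 * (b - 1))) := by
  unfold lambertArg; ring_nf

lemma neg_exp_neg_one_lt_lambertArg_zero (hb : 1 < b) (hk : 0 < k) :
    -exp (-1) < lambertArg b δ k L 0 := by
  have hB : 0 < b - 1 := sub_pos.2 hb
  rw [lambertArg_zero, neg_div]
  exact neg_exp_neg_one_lt_neg_mul_exp_neg (by rw [div_lt_div_iff₀ hB (by positivity)]; nlinarith)

lemma exit_value_eq_neg_mul_lambert {W : ℝ → ℝ} {ε : ℝ} (hb : b ≠ 1) (hε : ε ≠ 0)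
    (hW : W (lambertArg b δ k L ε) * exp (W (lambertArg b δ k L ε)) = lambertArg b δ k L ε) :
    δ * exp (-ε * (1 / ε * W (lambertArg b δ k L ε) + 1 / (2 * (b - 1)) * (L + (k + 2 * δ) / ε)))
      = -(b - 1) * W (lambertArg b δ k L ε) := by
  rw [← mul_exp_sub_eq_of_mul_exp_eq (sub_ne_zero.2 hb) hW]
  congr 2
  field_simp [sub_ne_zero.2 hb]
  ring

lemma limit_value_eq_neg_mul_lambert {W : ℝ → ℝ} (hb : b ≠ 1)
    (hW : W (lambertArg b δ k L 0) * exp (W (lambertArg b δ k L 0)) = lambertArg b δ k L 0) :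
    δ * exp (-W (lambertArg b δ k L 0) - (2 * δ + k) / (2 * (b - 1)))
      = -(b - 1) * W (lambertArg b δ k L 0) := by
  rw [← mul_exp_sub_eq_of_mul_exp_eq (sub_ne_zero.2 hb) hW]
  congr 2
  unfold lambertArg
  ring

end lambertArg

theorem exit_value_fast_recovery_general (b δ k η C : ℝ) (hb : 1 < b) (hδ : 0 < δ)
    (hk : 0 < k) (W : ℝ → ℝ)
    (hWcont : Continuous W) (hW0 : W 0 = 0)
    (hWinv : ∀ z ∈ Set.Icc (-Real.exp (-1)) 0, W z * Real.exp (W z) = z) :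
    let T : ℝ → ℝ := fun ε =>
      (1 / ε) * W (-(δ / (b - 1)) *
          Real.exp (-(ε * Real.log (η / C) + k + 2 * δ) / (2 * (b - 1)))) +
        (1 / (2 * (b - 1))) * (Real.log (η / C) + (k + 2 * δ) / ε)
    let Yout : ℝ → ℝ := fun ε => δ * Real.exp (-ε * T ε)
    let Ylim : ℝ := δ * Real.exp
        (-W (-(δ / (b - 1)) * Real.exp (-(2 * δ + k) / (2 * (b - 1)))) -
          (2 * δ + k) / (2 * (b - 1)))
    0 < Ylim ∧
    (∃ M > 0, ∃ ε₀ > 0, ∀ ε : ℝ, 0 < ε → ε < ε₀ → |Yout ε - Ylim| ≤ M * ε) ∧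
    Filter.Tendsto Yout (nhdsWithin 0 (Set.Ioi 0)) (nhds Ylim) := by
  intro T Yout Ylim
  set g := lambertArg b δ k (Real.log (η / C))
  have hW : ∀ ε, -exp (-1) ≤ g ε → W (g ε) * exp (W (g ε)) = g ε :=
    fun ε hε => hWinv _ ⟨hε, (lambertArg_neg hb hδ ε).le⟩
  have hg0 : -exp (-1) < g 0 := neg_exp_neg_one_lt_lambertArg_zero hb hk
  have hg : ContDiff ℝ 1 g := contDiff_lambertArg
  have hYlim : Ylim = -(b - 1) * W (g 0) := by
    rw [← limit_value_eq_neg_mul_lambert hb.ne' (hW 0 hg0.le), lambertArg_zero]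
  have hYout : ∀ᶠ ε in 𝓝[>] 0, Yout ε = -(b - 1) * W (g ε) := by
    filter_upwards [self_mem_nhdsWithin,
      nhdsWithin_le_nhds (hg.continuous.continuousAt.eventually (Ioi_mem_nhds hg0))] with ε hε hgε
    exact exit_value_eq_neg_mul_lambert hb.ne' (ne_of_gt hε) (hW ε (le_of_lt hgε))
  refine ⟨by positivity, exists_abs_le_mul_of_isBigO ?_, ?_⟩
  · have hO := isBigO_lambert_comp_sub hWcont hW0 hWinv hg.contDiffAt ⟨hg0, lambertArg_neg hb hδ 0⟩
    have hdiff : (fun ε => -(b - 1) * (W (g ε) - W (g 0))) =ᶠ[𝓝[>] 0] fun ε => Yout ε - Ylim :=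
      hYout.mono fun ε h => by simp only [h, hYlim]; ring
    exact ((hO.const_mul_left _).mono nhdsWithin_le_nhds).congr' hdiff (.of_forall sub_zero)
  · have hF : ContinuousAt (fun ε => -(b - 1) * W (g ε)) 0 :=
      continuousAt_const.mul (hWcont.comp hg.continuous).continuousAt
    rw [hYlim]
    exact (hF.tendsto.mono_left nhdsWithin_le_nhds).congr' (hYout.mono fun _ h => h.symm)

/-- Exceptionally fast recovery: with `Y(t) = δe^{-εt}` and the Lambert-function
transition time `T(ε)`, the exit value `Y_out(ε) = Y(T(ε))` satisfies, as
`ε → 0⁺`, `Y_out = δ exp[-W(-(δ/(b-1))e^{-(2δ+k)/(2(b-1))}) - (2δ+k)/(2(b-1))]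
+ O(ε)`; in particular the limit of the exit value is strictly positive and
independent of `ε`. -/
theorem exit_value_fast_recovery (b δ k η C : ℝ) (hb : 1 < b) (hδ : 0 < δ)
    (hk : 0 < k) (hη : 0 < η) (hC : 0 < C) (W : ℝ → ℝ)
    (hWcont : Continuous W) (hW0 : W 0 = 0)
    (hWinv : ∀ z ∈ Set.Icc (-Real.exp (-1)) 0, W z * Real.exp (W z) = z) :
    let T : ℝ → ℝ := fun ε =>
      (1 / ε) * W (-(δ / (b - 1)) *
          Real.exp (-(ε * Real.log (η / C) + k + 2 * δ) / (2 * (b - 1)))) +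
        (1 / (2 * (b - 1))) * (Real.log (η / C) + (k + 2 * δ) / ε)
    let Yout : ℝ → ℝ := fun ε => δ * Real.exp (-ε * T ε)
    let Ylim : ℝ := δ * Real.exp
        (-W (-(δ / (b - 1)) * Real.exp (-(2 * δ + k) / (2 * (b - 1)))) -
          (2 * δ + k) / (2 * (b - 1)))
    0 < Ylim ∧
    (∃ M > 0, ∃ ε₀ > 0, ∀ ε : ℝ, 0 < ε → ε < ε₀ → |Yout ε - Ylim| ≤ M * ε) ∧
    Filter.Tendsto Yout (nhdsWithin 0 (Set.Ioi 0)) (nhds Ylim) :=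
  exit_value_fast_recovery_general b δ k η C hb hδ hk W hWcont hW0 hWinv
end
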